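/- Let G be a finite connected locally connected graph of diameter two on n vertices having fewer than n distinct lines, and let x be any vertex. Then the number of distinct lines in the set {line(x,u) : u a neighbor of x} is strictly smaller than the degree |N(x)| of x. -/
import Mathlib

open SimpleGraph

/-- The line defined by two vertices `a` and `b` of a graph: `{a, b}` together with all
vertices `c` lying on a shortest path through `a`, `b` and `c` (in some order). -/
def SimpleGraph.line {V : Type*} (G : SimpleGraph V) (a b : V) : Set V :=
  {a, b} ∪ {c | G.dist a b = G.dist a c + G.dist c b ∨
                G.dist a c = G.dist a b + G.dist b c ∨
                G.dist b c = G.dist b a + G.dist a c}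

/-- The set of all lines of a graph. -/
def SimpleGraph.lineSet {V : Type*} (G : SimpleGraph V) : Set (Set V) :=
  {s | ∃ a b : V, a ≠ b ∧ s = G.line a b}

/-- A graph is locally connected if the subgraph induced on each neighborhood is connected. -/
def SimpleGraph.LocallyConnected {V : Type*} (G : SimpleGraph V) : Prop :=
  ∀ v : V, (G.induce (G.neighborSet v)).Connected

section Helpers

variable {V : Type*} {G : SimpleGraph V}

private lemma exists_penult {W : Type*} {H : SimpleGraph W} {a b : W}
    (p : H.Walk a b) (hab : a ≠ b) : ∃ c, c ≠ b ∧ H.Adj c b := by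
  induction p with
  | nil => exact absurd rfl hab
  | @cons u v w h q ih =>
    by_cases hvw : v = w
    · subst hvw; exact ⟨u, h.ne, h⟩
    · exact ih hvw

private lemma exists_first {W : Type*} {H : SimpleGraph W} {a b : W}
    (p : H.Walk a b) (hab : a ≠ b) : ∃ c, H.Adj a c := by
  cases p with
  | nil => exact absurd rfl hab
  | cons h q => exact ⟨_, h⟩

private lemma mem_line_iff {a b c : V} :
    c ∈ G.line a b ↔ (c = a ∨ c = b) ∨
      (G.dist a b = G.dist a c + G.dist c b ∨
       G.dist a c = G.dist a b + G.dist b c ∨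
       G.dist b c = G.dist b a + G.dist a c) := by
  simp [SimpleGraph.line, Set.mem_union, Set.mem_insert_iff, Set.mem_setOf_eq]

variable (hG : G.Connected) (h2 : ∀ a b : V, G.dist a b ≤ 2)
include hG h2

private lemma mem_line_adj {x u c : V} (hxu : G.Adj x u) :
    c ∈ G.line x u ↔ c = x ∨ c = u ∨
      (G.dist x c = 2 ∧ G.Adj u c) ∨ (G.dist u c = 2 ∧ G.Adj x c) := by
  have h1 : G.dist x u = 1 := dist_eq_one_iff_adj.mpr hxu
  have h1' : G.dist u x = 1 := dist_eq_one_iff_adj.mpr hxu.symm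
  rw [mem_line_iff, h1, h1']
  constructor
  · rintro (h | h)
    · tauto
    · rcases h with h | h | h
      · -- 1 = d x c + d c u
        have := h2 x c; have := h2 c u
        rcases (by omega : G.dist x c = 0 ∧ G.dist c u = 1 ∨
            G.dist x c = 1 ∧ G.dist c u = 0) with ⟨h0, _⟩ | ⟨_, h0⟩
        · exact Or.inl ((hG.dist_eq_zero_iff).mp h0).symm
        · exact Or.inr (Or.inl ((hG.dist_eq_zero_iff).mp h0))
      · -- d x c = 1 + d u c
        have := h2 x c
        rcases (by omega : G.dist u c = 0 ∨ (G.dist u c = 1 ∧ G.dist x c = 2)) with h0 | ⟨hd1, hd2⟩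
        · exact Or.inr (Or.inl ((hG.dist_eq_zero_iff).mp h0).symm)
        · exact Or.inr (Or.inr (Or.inl ⟨hd2, dist_eq_one_iff_adj.mp hd1⟩))
      · -- d u c = 1 + d x c
        have := h2 u c
        rcases (by omega : G.dist x c = 0 ∨ (G.dist x c = 1 ∧ G.dist u c = 2)) with h0 | ⟨hd1, hd2⟩
        · exact Or.inl ((hG.dist_eq_zero_iff).mp h0).symm
        · exact Or.inr (Or.inr (Or.inr ⟨hd2, dist_eq_one_iff_adj.mp hd1⟩))
  · rintro (rfl | rfl | ⟨hd, hadj⟩ | ⟨hd, hadj⟩)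
    · exact Or.inl (Or.inl rfl)
    · exact Or.inl (Or.inr rfl)
    · have : G.dist u c = 1 := dist_eq_one_iff_adj.mpr hadj
      exact Or.inr (Or.inr (Or.inl (by omega)))
    · have hcx : G.dist x c = 1 := dist_eq_one_iff_adj.mpr hadj
      exact Or.inr (Or.inr (Or.inr (by omega)))

private lemma mem_line_two {x w c : V} (hxw : G.dist x w = 2) :
    c ∈ G.line x w ↔ c = x ∨ c = w ∨ (G.Adj x c ∧ G.Adj c w) := by
  have hwx : G.dist w x = 2 := by rw [SimpleGraph.dist_comm]; exact hxw
  rw [mem_line_iff, hxw, hwx]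
  constructor
  · rintro (h | h)
    · tauto
    · rcases h with h | h | h
      · -- 2 = d x c + d c w
        have := h2 x c; have := h2 c w
        rcases (by omega : G.dist x c = 0 ∨ G.dist c w = 0 ∨
            (G.dist x c = 1 ∧ G.dist c w = 1)) with h0 | h0 | ⟨ha, hb⟩
        · exact Or.inl ((hG.dist_eq_zero_iff).mp h0).symm
        · exact Or.inr (Or.inl ((hG.dist_eq_zero_iff).mp h0))
        · exact Or.inr (Or.inr ⟨dist_eq_one_iff_adj.mp ha, dist_eq_one_iff_adj.mp hb⟩)
      · -- d x c = 2 + d w c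
        have := h2 x c
        have h0 : G.dist w c = 0 := by omega
        exact Or.inr (Or.inl ((hG.dist_eq_zero_iff).mp h0).symm)
      · -- d w c = 2 + d x c
        have := h2 w c
        have h0 : G.dist x c = 0 := by omega
        exact Or.inl ((hG.dist_eq_zero_iff).mp h0).symm
  · rintro (rfl | rfl | ⟨ha, hb⟩)
    · exact Or.inl (Or.inl rfl)
    · exact Or.inl (Or.inr rfl)
    · have h1 : G.dist x c = 1 := dist_eq_one_iff_adj.mpr ha
      have h1' : G.dist c w = 1 := dist_eq_one_iff_adj.mpr hb
      exact Or.inr (Or.inl (by omega))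

/-- If `x` has no neighbor other than `u`, but the graph has diameter 2 issues,
we derive the triangle existence. -/
private lemma line_two_ne_line_two {x w w' : V} (hxw : G.dist x w = 2)
    (hxw' : G.dist x w' = 2) (h : G.line x w = G.line x w') : w = w' := by
  have hw' : w' ∈ G.line x w := by
    rw [h, mem_line_two hG h2 hxw']; exact Or.inr (Or.inl rfl)
  rw [mem_line_two hG h2 hxw] at hw'
  rcases hw' with rfl | h | ⟨ha, _⟩
  · simp [SimpleGraph.dist_self] at hxw'
  · exact h.symm
  · have := dist_eq_one_iff_adj.mpr ha; omega

private lemma line_adj_ne_line_two (hlc : G.LocallyConnected) {x u w : V}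
    (hxu : G.Adj x u) (hxw : G.dist x w = 2) : G.line x u ≠ G.line x w := by
  intro heq
  have h1 : G.dist x u = 1 := dist_eq_one_iff_adj.mpr hxu
  -- u is adjacent to w
  have hu : u ∈ G.line x w := by
    rw [← heq, mem_line_adj hG h2 hxu]; exact Or.inr (Or.inl rfl)
  rw [mem_line_two hG h2 hxw] at hu
  have huw : G.Adj u w := by
    rcases hu with rfl | rfl | ⟨_, hb⟩
    · exact absurd h1 (by simp [hxu.ne'])
    · omega
    · exact hb
  -- key: no vertex adjacent to x, w and u simultaneously
  have hkey : ∀ c : V, G.Adj x c → G.Adj c w → G.Adj u c → False := by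
    intro c hxc hcw huc
    have hc : c ∈ G.line x u := by
      rw [heq, mem_line_two hG h2 hxw]; exact Or.inr (Or.inr ⟨hxc, hcw⟩)
    rw [mem_line_adj hG h2 hxu] at hc
    rcases hc with rfl | rfl | ⟨hd, _⟩ | ⟨hd, _⟩
    · exact hxc.ne rfl
    · exact huc.ne rfl
    · have := dist_eq_one_iff_adj.mpr hxc; omega
    · have := dist_eq_one_iff_adj.mpr huc; omega
  -- local connectivity at u
  have hxNu : x ∈ G.neighborSet u := hxu.symm
  have hwNu : w ∈ G.neighborSet u := huw
  have hxwne : x ≠ w := by rintro rfl; simp [SimpleGraph.dist_self] at hxw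
  obtain ⟨p⟩ := (hlc u).preconnected ⟨x, hxNu⟩ ⟨w, hwNu⟩
  obtain ⟨c, hcne, hcadj⟩ := exists_penult p (fun hh => hxwne (congrArg Subtype.val hh))
  have hcval : G.Adj (c : V) w := by simpa using hcadj
  have hcu : G.Adj u (c : V) := c.2
  have hcw : (c : V) ≠ w := fun hh => hcne (Subtype.ext hh)
  -- c must be adjacent to x
  have hxc : G.Adj x (c : V) := by
    by_cases hcx : (c : V) = x
    · exact absurd (hcx ▸ hcval) (by intro hh; have := dist_eq_one_iff_adj.mpr hh; omega)
    by_contra hnadj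
    have hd2 : G.dist x (c : V) = 2 := by
      have hle := h2 x (c : V)
      have hne0 : G.dist x (c : V) ≠ 0 :=
        fun h0 => hcx ((hG.dist_eq_zero_iff).mp h0).symm
      have hne1 : G.dist x (c : V) ≠ 1 := fun hh => hnadj (dist_eq_one_iff_adj.mp hh)
      omega
    have hc : (c : V) ∈ G.line x w := by
      rw [← heq, mem_line_adj hG h2 hxu]
      exact Or.inr (Or.inr (Or.inl ⟨hd2, hcu⟩))
    rw [mem_line_two hG h2 hxw] at hc
    rcases hc with h' | h' | ⟨h', _⟩
    · exact hcx h'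
    · exact hcw h'
    · exact hnadj h'
  exact hkey _ hxc hcval hcu

/-- There is a triangle through every vertex. -/
private lemma exists_triangle (hlc : G.LocallyConnected) (hdiam : G.diam = 2)
    [Fintype V] (x : V) : ∃ u v : V, G.Adj x u ∧ G.Adj x v ∧ G.Adj u v := by
  obtain ⟨⟨u, hu⟩⟩ := (hlc x).nonempty
  have hu : G.Adj x u := hu
  by_cases hex : ∃ v : V, G.Adj x v ∧ v ≠ u
  · obtain ⟨v, hv, hvu⟩ := hex
    obtain ⟨p⟩ := (hlc x).preconnected ⟨u, hu⟩ ⟨v, hv⟩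
    obtain ⟨c, hc⟩ := exists_first p (fun hh => hvu (congrArg Subtype.val hh).symm)
    have hc' : G.Adj u (c : V) := by simpa using hc
    exact ⟨u, c, hu, c.2, hc'⟩
  · exfalso
    push_neg at hex
    -- find a vertex w at distance 2 from x
    have hxu1 : G.dist x u = 1 := dist_eq_one_iff_adj.mpr hu
    have : Nonempty V := ⟨x⟩
    obtain ⟨a, b, hab⟩ := exists_dist_eq_diam (G := G) (α := V)
    rw [hdiam] at hab
    have habne : a ≠ b := by rintro rfl; simp [SimpleGraph.dist_self] at hab
    have hw : ∃ w : V, w ≠ x ∧ w ≠ u := by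
      by_cases ha : a = x ∨ a = u
      · refine ⟨b, ?_, ?_⟩ <;> rintro rfl <;> rcases ha with rfl | rfl
        · exact habne rfl
        · rw [SimpleGraph.dist_comm] at hab; omega
        · omega
        · exact habne rfl
      · push_neg at ha; exact ⟨a, ha.1, ha.2⟩
    obtain ⟨w, hwx, hwu⟩ := hw
    have hxw : G.dist x w = 2 := by
      have hle := h2 x w
      have hne0 : G.dist x w ≠ 0 :=
        fun h0 => hwx ((hG.dist_eq_zero_iff).mp h0).symm
      have hne1 : G.dist x w ≠ 1 := fun hh =>
        hwu (hex w (dist_eq_one_iff_adj.mp hh))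
      omega
    -- shortest walk of length 2 from x to w: middle vertex is u, so u ~ w
    obtain ⟨p, hp⟩ := hG.exists_walk_length_eq_dist x w
    rw [hxw] at hp
    have huw : G.Adj u w := by
      cases p with
      | nil => simp at hp
      | cons h q =>
        rename_i y
        cases q with
        | nil => simp at hp
        | cons h' q' =>
          cases q' with
          | nil =>
            have hcu : y = u := hex y h
            rw [hcu] at h'
            exact h'
          | cons h'' q'' =>
            simp [SimpleGraph.Walk.length_cons] at hp
    -- x and w lie in the neighborhood of u, which is connected
    have hxNu : x ∈ G.neighborSet u := hu.symm
    have hwNu : w ∈ G.neighborSet u := huw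
    obtain ⟨p'⟩ := (hlc u).preconnected ⟨x, hxNu⟩ ⟨w, hwNu⟩
    obtain ⟨c, hc⟩ := exists_first p' (fun hh => hwx (congrArg Subtype.val hh).symm)
    have hc' : G.Adj x (c : V) := by simpa using hc
    have hcu : (c : V) = u := hex _ hc'
    have hcontra : G.Adj u (c : V) := c.2
    rw [hcu] at hcontra
    exact hcontra.ne rfl

end Helpers

theorem neighbor_lines_lt_degree {V : Type*} [Fintype V] (G : SimpleGraph V)
    (hG : G.Connected) (hlc : G.LocallyConnected) (hdiam : G.diam = 2)
    (hlines : G.lineSet.ncard < Fintype.card V) (x : V) :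
    {s : Set V | ∃ u : V, G.Adj x u ∧ s = G.line x u}.ncard <
      (G.neighborSet x).ncard := by
  classical
  have h2 : ∀ a b : V, G.dist a b ≤ 2 := by
    intro a b
    have := dist_le_diam (G := G) (u := a) (v := b)
      (ediam_ne_top_of_diam_ne_zero (by rw [hdiam]; omega))
    omega
  by_contra hcon
  push_neg at hcon
  -- the map v ↦ line x v is injective on the neighborhood of x
  have hSeq : {s : Set V | ∃ u : V, G.Adj x u ∧ s = G.line x u}
      = (fun v => G.line x v) '' (G.neighborSet x) := by
    ext s
    simp only [Set.mem_setOf_eq, Set.mem_image, mem_neighborSet, eq_comm]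
  rw [hSeq] at hcon
  have hinj : Set.InjOn (fun v => G.line x v) (G.neighborSet x) := by
    exact Set.injOn_of_ncard_image_eq
      (le_antisymm (Set.ncard_image_le (Set.toFinite _)) hcon) (Set.toFinite _)
  -- triangle through x
  obtain ⟨u₀, v₀, hu₀, hv₀, huv₀⟩ := exists_triangle hG h2 hlc hdiam x
  -- the injection from V into lineSet
  set F : V → Set V := fun v => if v = x then G.line u₀ v₀ else G.line x v with hF
  have hxmem : ∀ v : V, x ∈ G.line x v := fun v => Or.inl (Or.inl rfl)
  have hxnot : x ∉ G.line u₀ v₀ := by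
    rw [mem_line_iff]
    have d1 : G.dist u₀ v₀ = 1 := dist_eq_one_iff_adj.mpr huv₀
    have d2 : G.dist u₀ x = 1 := dist_eq_one_iff_adj.mpr hu₀.symm
    have d3 : G.dist x v₀ = 1 := dist_eq_one_iff_adj.mpr hv₀
    have d4 : G.dist v₀ x = 1 := dist_eq_one_iff_adj.mpr hv₀.symm
    have d5 : G.dist v₀ u₀ = 1 := dist_eq_one_iff_adj.mpr huv₀.symm
    rintro ((rfl | rfl) | (h | h | h))
    · exact hu₀.ne rfl
    · exact hv₀.ne rfl
    all_goals omega
  have hdist12 : ∀ v : V, v ≠ x → G.Adj x v ∨ G.dist x v = 2 := by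
    intro v hv
    by_cases hadj : G.Adj x v
    · exact Or.inl hadj
    · right
      have hle := h2 x v
      have hne0 : G.dist x v ≠ 0 :=
        fun h0 => hv ((hG.dist_eq_zero_iff).mp h0).symm
      have hne1 : G.dist x v ≠ 1 := fun hh => hadj (dist_eq_one_iff_adj.mp hh)
      omega
  have hFinj : Function.Injective F := by
    intro v v' h
    simp only [hF] at h
    by_cases hv : v = x <;> by_cases hv' : v' = x
    · rw [hv, hv']
    · rw [if_pos hv, if_neg hv'] at h
      exact absurd (h ▸ hxmem v') hxnot
    · rw [if_neg hv, if_pos hv'] at h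
      exact absurd (h.symm ▸ hxmem v) hxnot
    · rw [if_neg hv, if_neg hv'] at h
      rcases hdist12 v hv with ha | ha <;> rcases hdist12 v' hv' with hb | hb
      · exact hinj ha hb h
      · exact absurd h (line_adj_ne_line_two hG h2 hlc ha hb)
      · exact absurd h.symm (line_adj_ne_line_two hG h2 hlc hb ha)
      · exact line_two_ne_line_two hG h2 ha hb h
  have hsub : F '' Set.univ ⊆ G.lineSet := by
    rintro s ⟨v, -, rfl⟩
    by_cases hv : v = x
    · exact ⟨u₀, v₀, huv₀.ne, by simp [hF, hv]⟩
    · exact ⟨x, v, fun hh => hv hh.symm, by simp [hF, hv]⟩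
  have hcard : Fintype.card V ≤ G.lineSet.ncard := by
    calc Fintype.card V = (Set.univ : Set V).ncard := by
          rw [Set.ncard_univ, Nat.card_eq_fintype_card]
      _ = (F '' Set.univ).ncard := (Set.ncard_image_of_injective _ hFinj).symm
      _ ≤ G.lineSet.ncard := Set.ncard_le_ncard hsub (Set.toFinite _)
  omega
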